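/- arXiv:0801.4114 — 2 statements merged into one kernel-verified Lean document; each statement's English description precedes it below -/
import Mathlib

section
/- For a word Q in simple reflections of a Coxeter group and an element w, the Demazure product of Q equals the maximum, in Bruhat order, of the products of all reduced subwords of Q; in particular Q contains a subword that is a reduced word for w if and only if w ≤ Dem(Q) in Bruhat order. -/
variable {B W : Type*} [DecidableEq B] [Group W] {M : CoxeterMatrix B} (cs : CoxeterSystem M W)

/-- The Bruhat order on a Coxeter group, via the subword property:
`u ≤ v` iff every reduced word for `v` contains a subword that is a reduced word for `u`. -/
def BruhatLe (u v : W) : Prop :=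
  ∀ Q : List B, cs.IsReduced Q → cs.wordProd Q = v →
    ∃ P : List B, P.Sublist Q ∧ cs.IsReduced P ∧ cs.wordProd P = u

/-- The Demazure product of a word in the simple reflections: multiply the letters in
order, omitting any letter that would decrease the length. -/
noncomputable def Dem (Q : List B) : W :=
  Q.foldl (fun w b => if cs.length w < cs.length (w * cs.simple b) then w * cs.simple b else w) 1

/-- The subword of `Q` obtained by deleting the letters at the positions in `F`
(positions are `0`-indexed); this is the complementary subword `Q ∖ F`. -/
def dmask (Q : List B) (F : Finset ℕ) : List B :=
  ((Q.zipIdx.map Prod.swap).filter fun p => p.1 ∉ F).map Prod.snd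

/-- The subword of `Q` consisting of the letters at the positions in `F` (in order). -/
def smask (Q : List B) (F : Finset ℕ) : List B :=
  ((Q.zipIdx.map Prod.swap).filter fun p => p.1 ∈ F).map Prod.snd

/-- `F` is a face of the subword complex `Δ(Q,w)`: `F` is a set of positions of `Q` such
that the complementary subword `Q ∖ F` contains a reduced word for `w`. -/
def IsFace (Q : List B) (w : W) (F : Finset ℕ) : Prop :=
  F ⊆ Finset.range Q.length ∧
    ∃ P : List B, P.Sublist (dmask Q F) ∧ cs.IsReduced P ∧ cs.wordProd P = w

/-- `F` is a facet (maximal face) of the subword complex `Δ(Q,w)`. -/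
def IsFacet (Q : List B) (w : W) (F : Finset ℕ) : Prop :=
  IsFace cs Q w F ∧ ∀ F' : Finset ℕ, IsFace cs Q w F' → F ⊆ F' → F' = F

/-!
Write `u ≤ v` for the chain order `CoxeterSystem.ChainLE`: `u` is reached from `v` by right
multiplications by reflections, each of which lowers the length. Tits' sign representation of `W`
on `W × ℤˣ` shows that a reflection `t` with `ℓ(wt) < ℓ(w)` occurs in the right inversion
sequence of every word for `w` (strong exchange). With the deletion property this gives the easy
half of the subword property: if `u ≤ v`, every reduced word for `v` has a reduced subword for `u`.

Appending a letter `i` to `Q` replaces `Dem Q` by `Dem Q ⋆ sᵢ`, where `w ⋆ s = max (w, ws)`, so by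
induction on `Q` everything follows from the lifting property `u ≤ v → us ≤ v ⋆ s`. That is proved
by induction on `ℓ(v)`. The hard case is `u ≤ v₁ < v` with `v₁ s > v₁` and `vs < v`: a reduced
word `τ s` for `v` contains a reduced word for `v₁`, which cannot end in `s`, so lies in `τ`. The
induction on words, run with the lifting property below `ℓ(v)`, gives `v₁ ≤ vs`, and lifting once
more gives `v₁ s ≤ v`.
-/

open scoped List

theorem List.sublist_append_singleton_iff {α : Type*} {l r : List α} {a : α} :
    l <+ r ++ [a] ↔ l <+ r ∨ ∃ l', l = l' ++ [a] ∧ l' <+ r := by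
  constructor
  · intro h
    obtain ⟨l₁, l₂, rfl, h₁, h₂⟩ := List.sublist_append_iff.1 h
    rcases List.sublist_cons_iff.1 h₂ with h₃ | ⟨r', rfl, h₃⟩
    · rw [List.sublist_nil.1 h₃, List.append_nil]
      exact Or.inl h₁
    · rw [List.sublist_nil.1 h₃]
      exact Or.inr ⟨l₁, rfl, h₁⟩
  · rintro (h | ⟨l', rfl, h⟩)
    · exact h.trans (List.sublist_append_left r [a])
    · exact (List.append_sublist_append_right [a]).2 h

theorem mul_mul_inv_eq_iff_eq_inv_mul_mul {G : Type*} [Group G] (g y z : G) :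
    g * y * g⁻¹ = z ↔ y = g⁻¹ * z * g := by
  constructor <;> rintro rfl <;> group

namespace CoxeterSystem

set_option linter.unusedSectionVars false

local prefix:100 "s " => cs.simple
local prefix:100 "π " => cs.wordProd
local prefix:100 "ℓ " => cs.length

section SignRepresentation

open Classical

noncomputable def signGen (i : B) : Function.End (W × ℤˣ) :=
  fun x => (s i * x.1 * s i, x.2 * if x.1 = s i then -1 else 1)

theorem inv_pow_mul_simple_mul_pow (i j : B) (n m : ℕ) :
    ((s i * s j) ^ n)⁻¹ * s j * (s i * s j) ^ m = s j * (s i * s j) ^ (n + m) := by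
  have h : SemiconjBy (s j) (s i * s j) (s j * s i) := (mul_assoc _ _ _).symm
  rw [← inv_pow, mul_inv_rev, cs.inv_simple, cs.inv_simple, ← (h.pow_right n).eq, mul_assoc,
    ← pow_add]

theorem signGen_mul_pow_apply (i j : B) (n : ℕ) (x : W × ℤˣ) :
    ((signGen cs i * signGen cs j) ^ n) x =
      ((s i * s j) ^ n * x.1 * ((s i * s j) ^ n)⁻¹,
        x.2 * ∏ r ∈ Finset.range (2 * n), if x.1 = s j * (s i * s j) ^ r then -1 else 1) := by
  set c := s i * s j with hc
  induction n with
  | zero => simp [Function.End.one_def]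
  | succ n ih =>
    have hj : ∀ y : W, c ^ n * y * (c ^ n)⁻¹ = s j ↔ y = s j * c ^ (2 * n) := by
      intro y
      rw [mul_mul_inv_eq_iff_eq_inv_mul_mul, inv_pow_mul_simple_mul_pow, two_mul]
    have hi : ∀ y : W, s j * (c ^ n * y * (c ^ n)⁻¹) * s j = s i ↔
        y = s j * c ^ (2 * n + 1) := by
      intro y
      have hsj := mul_mul_inv_eq_iff_eq_inv_mul_mul (s j) (c ^ n * y * (c ^ n)⁻¹) (s i)
      rw [cs.inv_simple] at hsj
      rw [hsj, mul_mul_inv_eq_iff_eq_inv_mul_mul, mul_assoc (s j) (s i), ← hc, ← mul_assoc,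
        mul_assoc _ c, ← pow_succ', inv_pow_mul_simple_mul_pow, two_mul, add_assoc]
    have hstep : ((signGen cs i * signGen cs j) ^ (n + 1)) x =
        signGen cs i (signGen cs j (((signGen cs i * signGen cs j) ^ n) x)) := by
      rw [pow_succ']
      rfl
    rw [hstep, ih]
    simp only [signGen, hi, hj]
    refine Prod.ext ?_ ?_
    · simp only [hc, pow_succ', mul_inv_rev, cs.inv_simple, mul_assoc]
    · simp only [Nat.mul_succ, Finset.prod_range_succ, mul_assoc]

theorem isLiftable_signGen : M.IsLiftable (signGen cs) := by
  intro i j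
  funext x
  rw [signGen_mul_pow_apply, cs.simple_mul_simple_pow, two_mul, Finset.prod_range_add]
  -- the factors for `r` and `M i j + r` agree, so the sign is a square
  simp only [pow_add, cs.simple_mul_simple_pow, one_mul, Int.units_mul_self]
  simp [Function.End.one_def]

noncomputable def signRep : W →* Function.End (W × ℤˣ) :=
  cs.lift ⟨signGen cs, isLiftable_signGen cs⟩

theorem signRep_wordProd_apply (ω : List B) (x : W × ℤˣ) :
    signRep cs (π ω) x = (π ω * x.1 * (π ω)⁻¹,
      x.2 * ((cs.rightInvSeq ω).map fun t => if x.1 = t then -1 else 1).prod) := by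
  induction ω generalizing x with
  | nil => simp [Function.End.one_def]
  | cons i ω ih =>
    have happ : signRep cs (π (i :: ω)) x = signGen cs i (signRep cs (π ω) x) := by
      rw [cs.wordProd_cons, map_mul, signRep, cs.lift_apply_simple]
      rfl
    rw [happ, ih, cs.wordProd_cons]
    simp only [signGen, mul_mul_inv_eq_iff_eq_inv_mul_mul, rightInvSeq, List.map_cons,
      List.prod_cons]
    refine Prod.ext ?_ ?_
    · simp only [mul_inv_rev, cs.inv_simple, mul_assoc]
    · ac_rfl

noncomputable def sign (w t : W) : ℤˣ := (signRep cs w (t, 1)).2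

theorem signRep_apply (w t : W) (ε : ℤˣ) :
    signRep cs w (t, ε) = (w * t * w⁻¹, ε * sign cs w t) := by
  obtain ⟨ω, rfl⟩ := cs.wordProd_surjective w
  simp [sign, signRep_wordProd_apply]

theorem sign_mul (w w' t : W) :
    sign cs (w * w') t = sign cs w' t * sign cs w (w' * t * w'⁻¹) := by
  have h : signRep cs (w * w') (t, 1) = signRep cs w (signRep cs w' (t, 1)) := by
    rw [map_mul]
    rfl
  simpa [signRep_apply] using congrArg Prod.snd h

theorem sign_one (t : W) : sign cs 1 t = 1 := by
  simpa using sign_mul cs 1 1 t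

theorem sign_simple_self (i : B) : sign cs (s i) (s i) = -1 := by
  rw [sign, ← cs.wordProd_singleton, signRep_wordProd_apply]
  simp

theorem mem_rightInvSeq_of_sign_eq_neg_one {ω : List B} {t : W} (h : sign cs (π ω) t = -1) :
    t ∈ cs.rightInvSeq ω := by
  by_contra ht
  have : ((cs.rightInvSeq ω).map fun u => if t = u then (-1 : ℤˣ) else 1).prod = 1 :=
    List.prod_eq_one fun y hy => by
      obtain ⟨u, hu, rfl⟩ := List.mem_map.mp hy
      exact if_neg (by rintro rfl; exact ht hu)
  simp [sign, signRep_wordProd_apply, this] at h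

theorem sign_self_of_isReflection {t : W} (ht : cs.IsReflection t) : sign cs t t = -1 := by
  obtain ⟨u, i, rfl⟩ := ht
  have h₁ := sign_mul cs u (s i * u⁻¹) (u * s i * u⁻¹)
  have h₂ := sign_mul cs (s i) u⁻¹ (u * s i * u⁻¹)
  have h₃ := sign_mul cs u⁻¹ u (s i)
  have e₁ : s i * u⁻¹ * (u * s i * u⁻¹) * (s i * u⁻¹)⁻¹ = s i := by simp [mul_assoc]
  have e₂ : u⁻¹ * (u * s i * u⁻¹) * u⁻¹⁻¹ = s i := by group
  rw [e₁, ← mul_assoc] at h₁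
  rw [e₂, sign_simple_self] at h₂
  rw [inv_mul_cancel, sign_one] at h₃
  rw [h₁, h₂, mul_neg_one, neg_mul, mul_comm, ← h₃]

theorem sign_eq_neg_one_of_length_mul_lt {w t : W} (ht : cs.IsReflection t)
    (hlt : ℓ (w * t) < ℓ w) : sign cs w t = -1 := by
  refine (Int.units_eq_one_or _).resolve_left fun h => ?_
  obtain ⟨ω, hω, hωw⟩ := cs.exists_isReduced (w * t)
  have hsign : sign cs (π ω) t = -1 := by
    rw [← hωw, sign_mul, ht.mul_self, one_mul, ht.inv, sign_self_of_isReflection cs ht, h,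
      mul_one]
  have hinv := cs.isRightInversion_of_mem_rightInvSeq hω
    (mem_rightInvSeq_of_sign_eq_neg_one cs hsign)
  rw [IsRightInversion, ← hωw, mul_assoc, ht.mul_self, mul_one] at hinv
  omega

end SignRepresentation

theorem exists_wordProd_eraseIdx_eq_mul (ω : List B) {t : W} (ht : cs.IsReflection t)
    (hlt : ℓ (π ω * t) < ℓ (π ω)) : ∃ j < ω.length, π (ω.eraseIdx j) = π ω * t := by
  obtain ⟨j, hj, rfl⟩ := List.mem_iff_getElem.mp
    (mem_rightInvSeq_of_sign_eq_neg_one cs (sign_eq_neg_one_of_length_mul_lt cs ht hlt))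
  refine ⟨j, by simpa using hj, ?_⟩
  rw [← cs.wordProd_mul_getD_rightInvSeq, List.getD_eq_getElem]

theorem isReduced_append_singleton_iff {ω : List B} {i : B} :
    cs.IsReduced (ω ++ [i]) ↔ cs.IsReduced ω ∧ ℓ (π ω) < ℓ (π ω * s i) := by
  simp only [IsReduced, cs.wordProd_append, cs.wordProd_singleton, List.length_append,
    List.length_singleton]
  rcases cs.length_mul_simple (π ω) i with h | h <;>
    have := cs.length_wordProd_le ω <;> omega

theorem exists_reduced_sublist (ω : List B) :
    ∃ ρ, ρ <+ ω ∧ cs.IsReduced ρ ∧ π ρ = π ω := by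
  induction ω using List.reverseRecOn with
  | nil => exact ⟨[], .refl _, by simp [IsReduced], rfl⟩
  | append_singleton ω i ih =>
    obtain ⟨ρ, hρω, hρ, hρπ⟩ := ih
    rw [cs.wordProd_append, cs.wordProd_singleton, ← hρπ]
    by_cases hasc : ℓ (π ρ) < ℓ (π ρ * s i)
    · exact ⟨ρ ++ [i], (List.append_sublist_append_right _).2 hρω,
        (isReduced_append_singleton_iff cs).2 ⟨hρ, hasc⟩, by simp [cs.wordProd_append]⟩
    · have hdesc : ℓ (π ρ * s i) + 1 = ℓ (π ρ) := by
        rcases cs.length_mul_simple (π ρ) i with h | h <;> omega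
      obtain ⟨j, hj, hjπ⟩ :=
        exists_wordProd_eraseIdx_eq_mul cs ρ (cs.isReflection_simple i) (by omega)
      refine ⟨ρ.eraseIdx j,
        (ρ.eraseIdx_sublist j).trans (hρω.trans (List.sublist_append_left _ _)), ?_, hjπ⟩
      rw [IsReduced] at hρ ⊢
      rw [hjπ, List.length_eraseIdx_of_lt hj]
      omega

def ReflectionDescent (u v : W) : Prop := ∃ t, cs.IsReflection t ∧ u = v * t ∧ ℓ u < ℓ v

def ChainLE : W → W → Prop := Relation.ReflTransGen (ReflectionDescent cs)

theorem chainLE_mul_of_length_mul_lt {v t : W} (ht : cs.IsReflection t)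
    (hlt : ℓ (v * t) < ℓ v) : ChainLE cs (v * t) v :=
  .single ⟨t, ht, rfl, hlt⟩

theorem chainLE_mul_simple_of_length_lt {v : W} {i : B} (hlt : ℓ v < ℓ (v * s i)) :
    ChainLE cs v (v * s i) := by
  simpa using chainLE_mul_of_length_mul_lt cs (cs.isReflection_simple i)
    (v := v * s i) (by simpa using hlt)

theorem ChainLE.bruhatLe {u v : W} (h : ChainLE cs u v) : BruhatLe cs u v := by
  induction h with
  | refl => exact fun ρ hρ hρu => ⟨ρ, .refl ρ, hρ, hρu⟩
  | tail _ hstep ih =>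
    obtain ⟨t, ht, rfl, hlt⟩ := hstep
    rintro ρ hρ rfl
    obtain ⟨j, -, hj⟩ := exists_wordProd_eraseIdx_eq_mul cs ρ ht hlt
    obtain ⟨ρ', hρ'ρ, hρ', hρ'π⟩ := exists_reduced_sublist cs (ρ.eraseIdx j)
    obtain ⟨σ, hσρ', hσ, hσπ⟩ := ih ρ' hρ' (hρ'π.trans hj)
    exact ⟨σ, hσρ'.trans (hρ'ρ.trans (ρ.eraseIdx_sublist j)), hσ, hσπ⟩

noncomputable def demMul (w : W) (i : B) : W := if ℓ w < ℓ (w * s i) then w * s i else w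

theorem demMul_eq_mul {w : W} {i : B} (h : ℓ w < ℓ (w * s i)) : demMul cs w i = w * s i :=
  if_pos h

theorem demMul_eq_self {w : W} {i : B} (h : ¬ℓ w < ℓ (w * s i)) : demMul cs w i = w :=
  if_neg h

theorem dem_append_singleton (ω : List B) (i : B) :
    Dem cs (ω ++ [i]) = demMul cs (Dem cs ω) i := by
  rw [Dem, List.foldl_append]
  rfl

theorem length_le_length_demMul (w : W) (i : B) : ℓ w ≤ ℓ (demMul cs w i) := by
  unfold demMul
  split_ifs with h <;> omega

theorem chainLE_demMul (w : W) (i : B) : ChainLE cs w (demMul cs w i) := by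
  unfold demMul
  split_ifs with h
  · exact chainLE_mul_simple_of_length_lt cs h
  · exact .refl

theorem chainLE_mul_simple_demMul (w : W) (i : B) : ChainLE cs (w * s i) (demMul cs w i) := by
  unfold demMul
  split_ifs with h
  · exact .refl
  · exact chainLE_mul_of_length_mul_lt cs (cs.isReflection_simple i)
      (by have := cs.length_mul_simple_ne w i; omega)

theorem dem_eq_wordProd_of_isReduced {ω : List B} (hω : cs.IsReduced ω) : Dem cs ω = π ω := by
  induction ω using List.reverseRecOn with
  | nil => rfl
  | append_singleton ω i ih =>
    obtain ⟨hω', hlt⟩ := (isReduced_append_singleton_iff cs).1 hω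
    rw [dem_append_singleton, ih hω', demMul_eq_mul cs hlt, cs.wordProd_append,
      cs.wordProd_singleton]

theorem exists_reduced_sublist_wordProd_eq_dem (ω : List B) :
    ∃ ρ, ρ <+ ω ∧ cs.IsReduced ρ ∧ π ρ = Dem cs ω := by
  induction ω using List.reverseRecOn with
  | nil => exact ⟨[], .refl _, by simp [IsReduced], rfl⟩
  | append_singleton ω i ih =>
    obtain ⟨ρ, hρω, hρ, hρπ⟩ := ih
    rw [dem_append_singleton]
    by_cases h : ℓ (Dem cs ω) < ℓ (Dem cs ω * s i)
    · refine ⟨ρ ++ [i], (List.append_sublist_append_right _).2 hρω,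
        (isReduced_append_singleton_iff cs).2 ⟨hρ, hρπ ▸ h⟩, ?_⟩
      rw [demMul_eq_mul cs h, cs.wordProd_append, cs.wordProd_singleton, hρπ]
    · exact ⟨ρ, hρω.trans (List.sublist_append_left _ _), hρ, by rw [demMul_eq_self cs h, hρπ]⟩

def LiftingBelow (n : ℕ) : Prop :=
  ∀ ⦃u v : W⦄, ℓ v < n → ChainLE cs u v → ∀ i, ChainLE cs (u * s i) (demMul cs v i)

theorem LiftingBelow.mono {m n : ℕ} (h : LiftingBelow cs n) (hmn : m ≤ n) : LiftingBelow cs m :=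
  fun _ _ hv => h (hv.trans_le hmn)

theorem chainLE_dem_of_sublist_of_liftingBelow {ω : List B}
    (hlift : LiftingBelow cs (ℓ (Dem cs ω) + 1)) {ρ : List B} (hρω : ρ <+ ω)
    (hρ : cs.IsReduced ρ) : ChainLE cs (π ρ) (Dem cs ω) := by
  induction ω using List.reverseRecOn generalizing ρ with
  | nil =>
    rw [List.sublist_nil.1 hρω]
    exact .refl
  | append_singleton ω i ih =>
    rw [dem_append_singleton] at hlift ⊢
    have hlen := length_le_length_demMul cs (Dem cs ω) i
    have hlift' : LiftingBelow cs (ℓ (Dem cs ω) + 1) := hlift.mono cs (by omega)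
    rcases List.sublist_append_singleton_iff.1 hρω with hρω' | ⟨ρ', rfl, hρ'ω⟩
    · exact (ih hlift' hρω' hρ).trans (chainLE_demMul cs _ i)
    · rw [cs.wordProd_append, cs.wordProd_singleton]
      exact hlift (by omega) (ih hlift' hρ'ω ((isReduced_append_singleton_iff cs).1 hρ).1) i

theorem chainLE_mul_simple_of_liftingBelow {x v : W} {i : B} (hlift : LiftingBelow cs (ℓ v))
    (hxv : ChainLE cs x v) (hx : ℓ x < ℓ (x * s i)) (hv : ℓ (v * s i) < ℓ v) :
    ChainLE cs (x * s i) v := by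
  obtain ⟨τ, hτ, hτv⟩ := cs.exists_isReduced (v * s i)
  have hτlen : ℓ (π τ) < ℓ v := hτv ▸ hv
  have hτasc : ℓ (π τ) < ℓ (π τ * s i) := by simpa [← hτv] using hv
  have hτi : π (τ ++ [i]) = v := by
    rw [cs.wordProd_append, cs.wordProd_singleton, ← hτv, cs.simple_mul_simple_cancel_right]
  obtain ⟨ρ, hρτi, hρ, rfl⟩ :=
    hxv.bruhatLe cs (τ ++ [i]) ((isReduced_append_singleton_iff cs).2 ⟨hτ, hτasc⟩) hτi
  rcases List.sublist_append_singleton_iff.1 hρτi with hρτ | ⟨ρ', rfl, -⟩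
  · have hρτ' : ChainLE cs (π ρ) (π τ) := by
      rw [← dem_eq_wordProd_of_isReduced cs hτ]
      exact chainLE_dem_of_sublist_of_liftingBelow cs
        (hlift.mono cs (by rw [dem_eq_wordProd_of_isReduced cs hτ]; omega)) hρτ hρ
    have hdem : demMul cs (π τ) i = v := by
      rw [demMul_eq_mul cs hτasc, ← hτv, cs.simple_mul_simple_cancel_right]
    exact hdem ▸ hlift hτlen hρτ' i
  · -- a reduced word for `x` ending in `i` would make `i` a descent of `x`
    obtain ⟨-, hρ'asc⟩ := (isReduced_append_singleton_iff cs).1 hρ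
    simp only [cs.wordProd_append, cs.wordProd_singleton, cs.simple_mul_simple_cancel_right] at hx
    omega

theorem chainLE_demMul_of_reflectionDescent {v₁ v : W} (i : B) (hlift : LiftingBelow cs (ℓ v))
    (h : ReflectionDescent cs v₁ v) : ChainLE cs (demMul cs v₁ i) (demMul cs v i) := by
  obtain ⟨t, ht, rfl, hlt⟩ := h
  have hstep : ChainLE cs (v * t) v := chainLE_mul_of_length_mul_lt cs ht hlt
  by_cases h₁ : ℓ (v * t) < ℓ (v * t * s i)
  · rw [demMul_eq_mul cs h₁]
    by_cases hv : ℓ v < ℓ (v * s i)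
    · have hconj : v * t * s i = v * s i * (s i * t * s i) := by simp [mul_assoc]
      rw [demMul_eq_mul cs hv, hconj]
      refine chainLE_mul_of_length_mul_lt cs (by simpa using ht.conj (s i)) ?_
      have := cs.length_mul_le (v * t) (s i)
      rw [cs.length_simple] at this
      rw [← hconj]
      omega
    · rw [demMul_eq_self cs hv]
      exact chainLE_mul_simple_of_liftingBelow cs hlift hstep h₁
        (by have := cs.length_mul_simple_ne v i; omega)
  · rw [demMul_eq_self cs h₁]
    exact hstep.trans (chainLE_demMul cs v i)

theorem liftingBelow (n : ℕ) : LiftingBelow cs n := by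
  induction n with
  | zero => exact fun _ _ hv => absurd hv (Nat.not_lt_zero _)
  | succ n ih =>
    intro u v hv huv i
    rcases huv.cases_tail with rfl | ⟨v₁, huv₁, hv₁v⟩
    · exact chainLE_mul_simple_demMul cs _ i
    · have hv₁ : ℓ v₁ < ℓ v := by
        obtain ⟨t, -, rfl, hlt⟩ := hv₁v
        exact hlt
      exact (ih (by omega) huv₁ i).trans
        (chainLE_demMul_of_reflectionDescent cs i (ih.mono cs (by omega)) hv₁v)

theorem chainLE_dem_of_sublist {ω ρ : List B} (hρω : ρ <+ ω) (hρ : cs.IsReduced ρ) :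
    ChainLE cs (π ρ) (Dem cs ω) :=
  chainLE_dem_of_sublist_of_liftingBelow cs (liftingBelow cs _) hρω hρ

end CoxeterSystem

/-- The Demazure product of `Q` is the maximum, in Bruhat order, of the products of the
reduced subwords of `Q`; in particular, `Q` contains a reduced word for `w` iff
`w ≤ Dem Q` in Bruhat order. -/
theorem dem_eq_max_of_reduced_subwords (Q : List B) (w : W) :
    (∃ P : List B, P.Sublist Q ∧ cs.IsReduced P ∧ cs.wordProd P = Dem cs Q) ∧
    (∀ P : List B, P.Sublist Q → cs.IsReduced P → BruhatLe cs (cs.wordProd P) (Dem cs Q)) ∧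
    ((∃ P : List B, P.Sublist Q ∧ cs.IsReduced P ∧ cs.wordProd P = w) ↔
      BruhatLe cs w (Dem cs Q)) := by
  have hle : ∀ P : List B, P.Sublist Q → cs.IsReduced P →
      BruhatLe cs (cs.wordProd P) (Dem cs Q) :=
    fun P hPQ hP => (cs.chainLE_dem_of_sublist hPQ hP).bruhatLe cs
  obtain ⟨P₀, hP₀Q, hP₀, hP₀dem⟩ := cs.exists_reduced_sublist_wordProd_eq_dem Q
  refine ⟨⟨P₀, hP₀Q, hP₀, hP₀dem⟩, hle, ⟨?_, fun hw => ?_⟩⟩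
  · rintro ⟨P, hPQ, hP, rfl⟩
    exact hle P hPQ hP
  · obtain ⟨P, hPP₀, hP, hPw⟩ := hw P₀ hP₀ hP₀dem
    exact ⟨P, hPP₀.trans hP₀Q, hP, hPw⟩
end

section
/- Every ridge (codimension-1 face) of a subword complex Δ(Q,w), with Q a reduced word, is contained in at most two facets. -/
variable {B W : Type*} [DecidableEq B] [Group W] {M : CoxeterMatrix B} (cs : CoxeterSystem M W)

/-!
Let `R` be a ridge and `P = Q ∖ R`, a word of length `ℓ(w) + 1`. A facet containing `R` is either
`R` itself, in which case maximality makes it the only facet containing `R`, or `R ∪ {x}` with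
`Q ∖ (R ∪ {x})` a reduced word for `w`, obtained from `P` by deleting one letter. Deleting the
`j`-th letter of `P` multiplies its product on the right by the `j`-th right inversion `t_j`, so
if three deletions `i < j < k` all give `w` then `t_j = t_k`. But `t_j` and `t_k` are also the
right inversions at positions `j - 1` and `k - 1` of the reduced word `P.eraseIdx i`, and the right
inversions of a reduced word are distinct.
-/

section

omit [DecidableEq B]

namespace List

theorem filter_fst_ne_eq_eraseIdx_idxOf {α β : Type*} [DecidableEq α] {L : List (α × β)}
    (h : (L.map Prod.fst).Nodup) (x : α) :
    L.filter (fun p => p.1 ≠ x) = L.eraseIdx ((L.map Prod.fst).idxOf x) := by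
  induction L with
  | nil => rfl
  | cons p L ih =>
    rw [map_cons, nodup_cons] at h
    by_cases hp : p.1 = x
    · subst hp
      rw [map_cons, idxOf_cons_self, eraseIdx_cons_zero, filter_cons_of_neg (by simp),
        filter_eq_self.2 fun q hq => by simpa using ne_of_mem_of_not_mem (mem_map_of_mem hq) h.1]
    · rw [map_cons, idxOf_cons_ne _ (by simpa using hp), eraseIdx_cons_succ,
        filter_cons_of_pos (by simpa using hp), ih h.2]

end List

namespace CoxeterSystem

theorem getD_rightInvSeq_eraseIdx {ω : List B} {j j' : ℕ} (h : j < j') :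
    (cs.rightInvSeq (ω.eraseIdx j)).getD (j' - 1) 1 = (cs.rightInvSeq ω).getD j' 1 := by
  induction ω generalizing j j' with
  | nil => simp [rightInvSeq]
  | cons b ω ih =>
    obtain ⟨j', rfl⟩ : ∃ k, j' = k + 1 := ⟨j' - 1, by omega⟩
    cases j with
    | zero => simp [rightInvSeq]
    | succ j =>
      obtain ⟨j', rfl⟩ : ∃ k, j' = k + 1 := ⟨j' - 1, by omega⟩
      simpa [rightInvSeq] using ih (by omega : j < j' + 1)

theorem eq_of_wordProd_eraseIdx_eq_of_isReduced {ω : List B} {i j k : ℕ} (hij : i < j)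
    (hik : i < k) (hj : j < ω.length) (hk : k < ω.length) (hred : cs.IsReduced (ω.eraseIdx i))
    (h : cs.wordProd (ω.eraseIdx j) = cs.wordProd (ω.eraseIdx k)) : j = k := by
  have ht : (cs.rightInvSeq ω).getD j 1 = (cs.rightInvSeq ω).getD k 1 := by
    apply mul_left_cancel (a := cs.wordProd ω)
    rw [cs.wordProd_mul_getD_rightInvSeq, cs.wordProd_mul_getD_rightInvSeq, h]
  have hlen : (cs.rightInvSeq (ω.eraseIdx i)).length = ω.length - 1 := by
    rw [cs.length_rightInvSeq, List.length_eraseIdx_of_lt (by omega)]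
  have hj' : j - 1 < (cs.rightInvSeq (ω.eraseIdx i)).length := by omega
  have hk' : k - 1 < (cs.rightInvSeq (ω.eraseIdx i)).length := by omega
  suffices j - 1 = k - 1 by omega
  rw [← hred.nodup_rightInvSeq.getElem_inj_iff (hi := hj') (hj := hk'),
    ← List.getD_eq_getElem _ 1 hj', ← List.getD_eq_getElem _ 1 hk',
    cs.getD_rightInvSeq_eraseIdx hij, cs.getD_rightInvSeq_eraseIdx hik, ht]

theorem eq_or_eq_or_eq_of_isReduced_eraseIdx {ω : List B} {w : W} {i j k : ℕ}
    (hi : i < ω.length) (hj : j < ω.length) (hk : k < ω.length)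
    (hri : cs.IsReduced (ω.eraseIdx i)) (hrj : cs.IsReduced (ω.eraseIdx j))
    (hrk : cs.IsReduced (ω.eraseIdx k)) (hwi : cs.wordProd (ω.eraseIdx i) = w)
    (hwj : cs.wordProd (ω.eraseIdx j) = w) (hwk : cs.wordProd (ω.eraseIdx k) = w) :
    i = j ∨ i = k ∨ j = k := by
  by_contra! hne
  obtain ⟨hij, hik, hjk⟩ := hne
  rcases (by omega : (i < j ∧ i < k) ∨ (j < i ∧ j < k) ∨ (k < i ∧ k < j)) with
    ⟨h₁, h₂⟩ | ⟨h₁, h₂⟩ | ⟨h₁, h₂⟩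
  · exact hjk (cs.eq_of_wordProd_eraseIdx_eq_of_isReduced h₁ h₂ hj hk hri (hwj.trans hwk.symm))
  · exact hik (cs.eq_of_wordProd_eraseIdx_eq_of_isReduced h₁ h₂ hi hk hrj (hwi.trans hwk.symm))
  · exact hij (cs.eq_of_wordProd_eraseIdx_eq_of_isReduced h₁ h₂ hi hj hrk (hwi.trans hwj.symm))

end CoxeterSystem

theorem map_fst_filter_zipIdx_swap (Q : List B) (F : Finset ℕ) :
    ((Q.zipIdx.map Prod.swap).filter fun p => p.1 ∉ F).map Prod.fst =
      (List.range Q.length).filter (· ∉ F) := by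
  have h : (Q.zipIdx.map Prod.swap).map Prod.fst = List.range Q.length := by
    rw [List.map_map]
    exact (List.zipIdx_map_snd 0 Q).trans List.range_eq_range'.symm
  rw [← h, List.filter_map (f := Prod.fst)]
  rfl

theorem length_dmask_eq_length_filter (Q : List B) (F : Finset ℕ) :
    (dmask Q F).length = ((List.range Q.length).filter (· ∉ F)).length := by
  rw [dmask, List.length_map, ← map_fst_filter_zipIdx_swap, List.length_map]

theorem length_dmask {Q : List B} {F : Finset ℕ} (h : F ⊆ Finset.range Q.length) :
    (dmask Q F).length = Q.length - F.card := by
  have h' : ((List.range Q.length).filter (· ∉ F)).length =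
      ((Finset.range Q.length).filter (· ∉ F)).card := rfl
  rw [length_dmask_eq_length_filter, h', ← Finset.sdiff_eq_filter, Finset.card_sdiff_of_subset h,
    Finset.card_range]

theorem dmask_insert (Q : List B) (F : Finset ℕ) (x : ℕ) :
    dmask Q (insert x F) =
      (dmask Q F).eraseIdx (((List.range Q.length).filter (· ∉ F)).idxOf x) := by
  rw [dmask, dmask, List.eraseIdx_map, ← map_fst_filter_zipIdx_swap,
    ← List.filter_fst_ne_eq_eraseIdx_idxOf, List.filter_filter]
  · congr 2; ext p; simp
  · rw [map_fst_filter_zipIdx_swap]; exact List.nodup_range.filter _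

theorem eq_or_eq_or_eq_of_isReduced_dmask_insert {Q : List B} {R : Finset ℕ} {w : W}
    {x₁ x₂ x₃ : ℕ} (hx₁ : x₁ < Q.length) (hx₂ : x₂ < Q.length) (hx₃ : x₃ < Q.length)
    (hx₁R : x₁ ∉ R) (hx₂R : x₂ ∉ R) (hx₃R : x₃ ∉ R)
    (h₁ : cs.IsReduced (dmask Q (insert x₁ R)) ∧ cs.wordProd (dmask Q (insert x₁ R)) = w)
    (h₂ : cs.IsReduced (dmask Q (insert x₂ R)) ∧ cs.wordProd (dmask Q (insert x₂ R)) = w)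
    (h₃ : cs.IsReduced (dmask Q (insert x₃ R)) ∧ cs.wordProd (dmask Q (insert x₃ R)) = w) :
    x₁ = x₂ ∨ x₁ = x₃ ∨ x₂ = x₃ := by
  set K := (List.range Q.length).filter (· ∉ R)
  have hK : ∀ {x}, x < Q.length → x ∉ R → x ∈ K := fun hx hxR => by simp [K, hx, hxR]
  have hlt : ∀ {x}, x < Q.length → x ∉ R → K.idxOf x < (dmask Q R).length := fun hx hxR => by
    rw [length_dmask_eq_length_filter]; exact List.idxOf_lt_length_of_mem (hK hx hxR)
  rw [dmask_insert] at h₁ h₂ h₃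
  have := cs.eq_or_eq_or_eq_of_isReduced_eraseIdx (hlt hx₁ hx₁R) (hlt hx₂ hx₂R) (hlt hx₃ hx₃R)
    h₁.1 h₂.1 h₃.1 h₁.2 h₂.2 h₃.2
  simpa only [List.idxOf_inj (hK hx₁ hx₁R), List.idxOf_inj (hK hx₂ hx₂R)] using this

theorem IsFace.eq_or_eq_insert_of_subset {Q : List B} {w : W} {R F : Finset ℕ}
    (hcard : R.card + cs.length w + 1 = Q.length) (hF : IsFace cs Q w F) (hRF : R ⊆ F) :
    F = R ∨ ∃ x < Q.length, x ∉ R ∧ insert x R = F ∧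
      cs.IsReduced (dmask Q F) ∧ cs.wordProd (dmask Q F) = w := by
  obtain ⟨hFQ, P, hPF, hPred, hPw⟩ := hF
  have hlen : (dmask Q F).length = Q.length - F.card := length_dmask hFQ
  have hPlen : P.length = cs.length w := by rw [← hPw, hPred]
  have hPle := hPF.length_le
  have hRF' := Finset.card_le_card hRF
  have hFQ' : F.card ≤ Q.length := by simpa using Finset.card_le_card hFQ
  rcases (by omega : F.card = R.card ∨ R.card + 1 = F.card) with h | h
  · exact Or.inl (Finset.eq_of_subset_of_card_le hRF h.le).symm
  · obtain ⟨x, hxR, rfl⟩ := Finset.exists_eq_insert_iff.2 ⟨hRF, h⟩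
    obtain rfl : P = dmask Q (insert x R) := hPF.eq_of_length (by omega)
    exact Or.inr ⟨x, by simpa using hFQ (Finset.mem_insert_self x R), hxR, rfl, hPred, hPw⟩

end

theorem ridge_in_at_most_two_facets (Q : List B) (v w : W)
    (hred : cs.IsReduced Q) (hv : cs.wordProd Q = v)
    (R : Finset ℕ)
    (hcard : R.card + 1 = cs.length v - cs.length w) :
    ∀ F₁ F₂ F₃ : Finset ℕ, IsFacet cs Q w F₁ → IsFacet cs Q w F₂ → IsFacet cs Q w F₃ →
      R ⊆ F₁ → R ⊆ F₂ → R ⊆ F₃ → F₁ = F₂ ∨ F₁ = F₃ ∨ F₂ = F₃ := by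
  intro F₁ F₂ F₃ hf₁ hf₂ hf₃ hr₁ hr₂ hr₃
  have hRcard : R.card + cs.length w + 1 = Q.length := by rw [← hred, hv]; omega
  rcases hf₁.1.eq_or_eq_insert_of_subset cs hRcard hr₁ with rfl | ⟨x₁, hx₁, hx₁R, rfl, h₁⟩
  · exact Or.inl (hf₁.2 F₂ hf₂.1 hr₂).symm
  rcases hf₂.1.eq_or_eq_insert_of_subset cs hRcard hr₂ with rfl | ⟨x₂, hx₂, hx₂R, rfl, h₂⟩
  · exact Or.inl (hf₂.2 _ hf₁.1 hr₁)
  rcases hf₃.1.eq_or_eq_insert_of_subset cs hRcard hr₃ with rfl | ⟨x₃, hx₃, hx₃R, rfl, h₃⟩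
  · exact Or.inr (Or.inl (hf₃.2 _ hf₁.1 hr₁))
  rcases eq_or_eq_or_eq_of_isReduced_dmask_insert cs hx₁ hx₂ hx₃ hx₁R hx₂R hx₃R h₁ h₂ h₃
    with rfl | rfl | rfl <;> simp
end
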